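/- For every l ≥ 1 there exists a trading instance with l+1 agents and l+1 items in which every agent demands at most l items, the optimal (dynamic) execution performs l(l+1) exchanges, and every static execution performs at most l+1 exchanges; hence the ratio between the optimal dynamic welfare and the optimal static welfare equals l. -/

import Mathlib

structure TState (N M : Type) where
  own : N → Finset M
  dem : N → Finset M

variable {N M : Type} [DecidableEq N] [DecidableEq M]

/-- In a trading cycle `c = [(i₁,j₁),…,(i_k,j_k)]`, agent `i_t` receives item `j_t`;
`gives c` pairs each agent with the item he gives, namely `j_{t-1}` (cyclically). -/
def gives (c : List (N × M)) : List (N × M) :=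
  (c.map Prod.fst).zip ((c.rotate (c.length - 1)).map Prod.snd)

/-- A valid cycle step: nonempty, visits each agent and each item at most once,
every participating agent receives an item he currently demands and gives an item
he currently owns. -/
def ValidCycle (s : TState N M) (c : List (N × M)) : Prop :=
  c ≠ [] ∧ (c.map Prod.fst).Nodup ∧ (c.map Prod.snd).Nodup ∧
    (∀ p ∈ c, p.2 ∈ s.dem p.1) ∧ (∀ p ∈ gives c, p.2 ∈ s.own p.1)

/-- The state after executing a cycle: every used demand edge is reversed into a
supply edge (the received item moves into the agent's supply and leaves his demand),
and every used supply edge is removed. -/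
def stepCycle (s : TState N M) (c : List (N × M)) : TState N M where
  own i := ((s.own i).filter fun j => (i, j) ∉ gives c) ∪
      ((c.filter fun p => decide (p.1 = i)).map Prod.snd).toFinset
  dem i := (s.dem i).filter fun j => (i, j) ∉ c

/-- An execution is a sequence of cycle steps, each valid in the successively
updated state. -/
def ValidExec (s : TState N M) : List (List (N × M)) → Prop
  | [] => True
  | c :: r => ValidCycle s c ∧ ValidExec (stepCycle s c) r

/-- Total number of exchanges (items received) in an execution. -/
def exchanges (r : List (List (N × M))) : ℕ := (r.map List.length).sum

/-- Number of items agent `i` receives during execution `r`. -/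
def receivedCount (r : List (List (N × M))) (i : N) : ℕ :=
  (r.map fun c => c.countP fun p => decide (p.1 = i)).sum

/-- Number of items agent `i` gives during execution `r`. -/
def givenCount (r : List (List (N × M))) (i : N) : ℕ :=
  (r.map fun c => (gives c).countP fun p => decide (p.1 = i)).sum

/-- A static execution allocates each item at most once. -/
def StaticExec (r : List (List (N × M))) : Prop := (r.flatten.map Prod.snd).Nodup

/-- The instance with `l+1` agents and items, where agent `i` owns item `i` and
demands all other items. -/
def tightInstance (l : ℕ) : TState (Fin (l + 1)) (Fin (l + 1)) :=
  ⟨fun i => {i}, fun i => Finset.univ.erase i⟩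

/-! Each agent receives at most once per cycle an item he demands, and that demand edge
disappears, so over any execution agent `i` receives at most `|dem i|` items; for the tight
instance this caps every execution at `l(l+1)` exchanges. A static execution allocates every
item at most once, so it makes at most `l+1` exchanges. The cap `l(l+1)` is attained by the `l`
rounds in which every agent `i` simultaneously receives item `i + k`, `k = 1, …, l`. -/

open Fin.NatCast

section UpperBounds

variable {s : TState N M} {c : List (N × M)}

theorem countP_fst_eq_le_card_filter_dem (hc : ValidCycle s c) (i : N) :
    c.countP (fun p => decide (p.1 = i)) ≤ ((s.dem i).filter fun j => (i, j) ∈ c).card := by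
  obtain ⟨-, -, hsnd, hdem, -⟩ := hc
  have hnodup : ((c.filter fun p => decide (p.1 = i)).map Prod.snd).Nodup :=
    hsnd.sublist (List.filter_sublist.map _)
  rw [List.countP_eq_length_filter, ← List.length_map Prod.snd,
    ← List.toFinset_card_of_nodup hnodup]
  refine Finset.card_le_card fun j hj => ?_
  obtain ⟨p, hp, rfl⟩ := List.mem_map.mp (List.mem_toFinset.mp hj)
  obtain ⟨hpc, hpi⟩ := List.mem_filter.mp hp
  rw [decide_eq_true_eq] at hpi
  subst hpi
  exact Finset.mem_filter.mpr ⟨hdem p hpc, hpc⟩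

theorem card_dem_stepCycle_add_countP_le (hc : ValidCycle s c) (i : N) :
    ((stepCycle s c).dem i).card + c.countP (fun p => decide (p.1 = i)) ≤ (s.dem i).card := by
  have hsplit := Finset.card_filter_add_card_filter_not (s := s.dem i) (fun j => (i, j) ∈ c)
  have hrecv := countP_fst_eq_le_card_filter_dem hc i
  simp only [stepCycle]
  omega

theorem receivedCount_le_card_dem {r : List (List (N × M))} (hr : ValidExec s r) (i : N) :
    receivedCount r i ≤ (s.dem i).card := by
  induction r generalizing s with
  | nil => simp [receivedCount]
  | cons c r ih =>
    obtain ⟨hc, hr⟩ := hr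
    have hrest := ih hr
    have hfirst := card_dem_stepCycle_add_countP_le hc i
    simp only [receivedCount, List.map_cons, List.sum_cons] at hrest ⊢
    omega

omit [DecidableEq M] in
theorem length_eq_sum_countP_fst [Fintype N] (c : List (N × M)) :
    c.length = ∑ i, c.countP (fun p => decide (p.1 = i)) := by
  have hcount := Multiset.sum_count_eq_card (s := Finset.univ)
    (m := ((c.map Prod.fst : List N) : Multiset N)) (by simp)
  simp only [Multiset.coe_count, Multiset.coe_card, List.length_map, List.count,
    List.countP_map] at hcount
  rw [← hcount]
  rfl

omit [DecidableEq M] in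
theorem exchanges_eq_sum_receivedCount [Fintype N] (r : List (List (N × M))) :
    exchanges r = ∑ i, receivedCount r i := by
  induction r with
  | nil => simp [exchanges, receivedCount]
  | cons c r ih =>
    simp only [exchanges, receivedCount, List.map_cons, List.sum_cons,
      Finset.sum_add_distrib] at ih ⊢
    rw [ih, length_eq_sum_countP_fst]

theorem exchanges_le_sum_card_dem [Fintype N] {r : List (List (N × M))} (hr : ValidExec s r) :
    exchanges r ≤ ∑ i, (s.dem i).card :=
  (exchanges_eq_sum_receivedCount r).trans_le
    (Finset.sum_le_sum fun i _ => receivedCount_le_card_dem hr i)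

omit [DecidableEq N] [DecidableEq M] in
theorem StaticExec.exchanges_le_card [Fintype M] {r : List (List (N × M))} (hr : StaticExec r) :
    exchanges r ≤ Fintype.card M := by
  have hlen : exchanges r = (r.flatten.map Prod.snd).length := by
    rw [exchanges, List.length_map, List.length_flatten]
  exact hlen ▸ hr.length_le_card

end UpperBounds

theorem validExec_map_range' {S : ℕ → TState N M} {C : ℕ → List (N × M)} {L : ℕ}
    (hvalid : ∀ m < L, ValidCycle (S m) (C m)) (hstep : ∀ m < L, stepCycle (S m) (C m) = S (m + 1))
    {k n : ℕ} (hkn : k + n ≤ L) : ValidExec (S k) ((List.range' k n).map C) := by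
  induction n generalizing k with
  | zero => trivial
  | succ n ih =>
    rw [List.range'_succ, List.map_cons]
    refine ⟨hvalid k (by omega), ?_⟩
    rw [hstep k (by omega)]
    exact ih (by omega)

section GraphCycles

def graphCycle {n : ℕ} (f : Fin n → M) : List (Fin n × M) :=
  (List.finRange n).map fun i => (i, f i)

variable {n : ℕ}

omit [DecidableEq M] in
theorem mem_graphCycle {f : Fin n → M} {p : Fin n × M} : p ∈ graphCycle f ↔ p.2 = f p.1 := by
  simp only [graphCycle, List.mem_map, List.mem_finRange, true_and]
  exact ⟨by rintro ⟨i, rfl⟩; rfl, fun h => ⟨p.1, by rw [← h]⟩⟩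

omit [DecidableEq M] in
theorem length_graphCycle (f : Fin n → M) : (graphCycle f).length = n := by
  simp [graphCycle]

theorem finRange_rotate_eq_map_sub_one :
    (List.finRange (n + 1)).rotate n = (List.finRange (n + 1)).map (· - 1) := by
  apply List.ext_getElem (by simp)
  intro t h1 h2
  obtain _ | n := n
  · simp
  · simp only [List.getElem_rotate, List.getElem_finRange, List.getElem_map,
      List.length_finRange, Fin.ext_iff, Fin.sub_def, Fin.val_one', Fin.val_cast,
      Nat.one_mod_eq_one.mpr (by omega : n + 1 + 1 ≠ 1)]
    congr 1
    omega

omit [DecidableEq M] in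
theorem gives_graphCycle (f : Fin (n + 1) → M) :
    gives (graphCycle f) = graphCycle fun i => f (i - 1) := by
  rw [gives, length_graphCycle, Nat.add_sub_cancel, graphCycle, ← List.map_rotate,
    finRange_rotate_eq_map_sub_one, List.map_map, List.map_map, List.map_map, List.zip_map']
  rfl

omit [DecidableEq M] in
theorem validCycle_graphCycle {s : TState (Fin (n + 1)) M} {f : Fin (n + 1) → M}
    (hf : Function.Injective f) (hdem : ∀ i, f i ∈ s.dem i) (hown : ∀ i, f (i - 1) ∈ s.own i) :
    ValidCycle s (graphCycle f) := by
  refine ⟨?_, ?_, ?_, fun p hp => ?_, fun p hp => ?_⟩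
  · simp [graphCycle]
  · simpa [graphCycle, Function.comp_def] using List.nodup_finRange (n + 1)
  · simpa [graphCycle, Function.comp_def] using (List.nodup_finRange (n + 1)).map hf
  · exact mem_graphCycle.mp hp ▸ hdem p.1
  · rw [gives_graphCycle] at hp
    exact mem_graphCycle.mp hp ▸ hown p.1

end GraphCycles

section TightInstance

variable (l : ℕ)

def roundState (k : ℕ) : TState (Fin (l + 1)) (Fin (l + 1)) :=
  ⟨fun i => {i + (k : Fin (l + 1))}, fun i => Finset.univ.filter fun j => k < (j - i).val⟩

def roundCycle (k : ℕ) : List (Fin (l + 1) × Fin (l + 1)) :=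
  graphCycle fun i => i + (k : Fin (l + 1))

theorem roundState_zero : roundState l 0 = tightInstance l := by
  simp only [roundState, tightInstance, Nat.cast_zero, add_zero, TState.mk.injEq, true_and]
  funext i
  ext j
  simp [Nat.pos_iff_ne_zero, Fin.val_eq_zero_iff, sub_eq_zero]

variable {l}

theorem val_sub_eq_iff {k : ℕ} (hk : k < l + 1) {i j : Fin (l + 1)} :
    (j - i).val = k ↔ j = i + (k : Fin (l + 1)) := by
  rw [← sub_eq_iff_eq_add', Fin.ext_iff, Fin.val_cast_of_lt hk]

theorem sub_one_add_natCast_succ (i : Fin (l + 1)) (k : ℕ) :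
    i - 1 + ((k + 1 : ℕ) : Fin (l + 1)) = i + k := by
  push_cast
  abel

theorem validCycle_roundCycle {k : ℕ} (hk : k < l) :
    ValidCycle (roundState l k) (roundCycle l (k + 1)) := by
  refine validCycle_graphCycle (add_left_injective _) (fun i => ?_) (fun i => ?_)
  · simp only [roundState, Finset.mem_filter, Finset.mem_univ, true_and, add_sub_cancel_left,
      Fin.val_cast_of_lt (by omega : k + 1 < l + 1)]
    omega
  · simp only [roundState, Finset.mem_singleton, sub_one_add_natCast_succ]

theorem stepCycle_roundCycle {k : ℕ} (hk : k < l) :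
    stepCycle (roundState l k) (roundCycle l (k + 1)) = roundState l (k + 1) := by
  simp only [stepCycle, roundState, roundCycle, TState.mk.injEq]
  constructor
  · funext i
    ext j
    simp only [Finset.mem_union, Finset.mem_filter, Finset.mem_singleton, List.mem_toFinset,
      List.mem_map, List.mem_filter, decide_eq_true_eq, gives_graphCycle, mem_graphCycle,
      sub_one_add_natCast_succ]
    constructor
    · rintro (⟨rfl, hne⟩ | ⟨p, ⟨hp, rfl⟩, rfl⟩)
      · exact absurd rfl hne
      · exact hp
    · rintro rfl
      exact Or.inr ⟨(i, _), ⟨rfl, rfl⟩, rfl⟩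
  · funext i
    ext j
    have := val_sub_eq_iff (i := i) (j := j) (by omega : k + 1 < l + 1)
    simp only [Finset.mem_filter, Finset.mem_univ, true_and, mem_graphCycle, ← this]
    omega

theorem validExec_rounds :
    ValidExec (tightInstance l) ((List.range' 0 l).map fun k => roundCycle l (k + 1)) := by
  rw [← roundState_zero]
  exact validExec_map_range' (fun _ => validCycle_roundCycle) (fun _ => stepCycle_roundCycle)
    (by omega)

theorem exchanges_rounds :
    exchanges ((List.range' 0 l).map fun k => roundCycle l (k + 1)) = l * (l + 1) := by
  simp [exchanges, roundCycle, Function.comp_def, length_graphCycle]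

end TightInstance

theorem stmt2_general (l : ℕ) :
    (∀ i : Fin (l + 1), ((tightInstance l).dem i).card ≤ l) ∧
    (∃ r : List (List (Fin (l + 1) × Fin (l + 1))),
        ValidExec (tightInstance l) r ∧ exchanges r = l * (l + 1)) ∧
    (∀ r : List (List (Fin (l + 1) × Fin (l + 1))),
        ValidExec (tightInstance l) r → exchanges r ≤ l * (l + 1)) ∧
    (∀ r : List (List (Fin (l + 1) × Fin (l + 1))),
        ValidExec (tightInstance l) r → StaticExec r → exchanges r ≤ l + 1) := by
  have hcard : ∀ i, ((tightInstance l).dem i).card = l := by simp [tightInstance]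
  refine ⟨fun i => (hcard i).le, ⟨_, validExec_rounds, exchanges_rounds⟩, fun r hr => ?_,
    fun r _ hs => ?_⟩
  · calc exchanges r ≤ ∑ i, ((tightInstance l).dem i).card := exchanges_le_sum_card_dem hr
      _ = l * (l + 1) := by simp [hcard, mul_comm]
  · simpa using hs.exchanges_le_card

/-- In this instance every agent demands at most `l` items, the
optimal (dynamic) execution performs `l(l+1)` exchanges, and every static execution
performs at most `l+1` exchanges: the dynamic/static gap is exactly `l`. -/
theorem stmt2 (l : ℕ) (hl : 1 ≤ l) :
    (∀ i : Fin (l + 1), ((tightInstance l).dem i).card ≤ l) ∧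
    (∃ r : List (List (Fin (l + 1) × Fin (l + 1))),
        ValidExec (tightInstance l) r ∧ exchanges r = l * (l + 1)) ∧
    (∀ r : List (List (Fin (l + 1) × Fin (l + 1))),
        ValidExec (tightInstance l) r → exchanges r ≤ l * (l + 1)) ∧
    (∀ r : List (List (Fin (l + 1) × Fin (l + 1))),
        ValidExec (tightInstance l) r → StaticExec r → exchanges r ≤ l + 1) :=
  stmt2_general l
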